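/- arXiv:2311.14247 — 3 statements merged into one kernel-verified Lean document; each statement's English description precedes it below -/
import Mathlib

section
/- For every δ ∈ (0,1) and every C > 0 there exists N ∈ ℕ such that for all n ≥ N and all ρ ∈ (0,1] with ρ ≥ C·n^{−δ}, setting η = 1 − ρ, every eigenvalue of the n×n real symmetric matrix φ^cycle with entries φ^cycle_{ij} = η^{|i−j|} + η^{n−|i−j|} − η^n (rows and columns indexed by {0,…,n−1}) is strictly greater than ρ/4. -/
/-!
Write `K_{ij} = η^{|i-j|} + η^{n-|i-j|}`, so that `φ^cycle = K - η^n J` with `J` the all-ones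
matrix. For the circulant `W_{ij} = η^{(i-j) mod n}` one has `(1 - η²) WᵀW = (1 - η^n) K` and
`(Wv)_i - η (Wv)_{i-1} = (1 - η^n) v_i`. The latter gives `‖Wv‖ ≥ (1 - η^n)/(1 + η) ‖v‖`,
hence `vᵀKv ≥ (1 - η)(1 - η^n)/(1 + η) ‖v‖²`, while `vᵀJv ≤ n ‖v‖²`. So every eigenvalue is
at least `ρ(1 - η^n)/(2 - ρ) - n η^n`, and `(n + 1) η^n ≤ ρ/4` once `ρ ≥ C n^{-δ}` and `n` is
large, because `η^n ≤ exp(-C n^{1-δ})` decays faster than any power of `n`.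
-/

open Finset Filter Matrix Real Topology
open scoped Fin.NatCast

theorem one_sub_sq_mul_sum_pow_add_mod (η : ℝ) {n e : ℕ} (he : e ≤ n) :
    (1 - η ^ 2) * ∑ a ∈ range n, η ^ (a + (a + e) % n) =
      (1 - η ^ n) * (η ^ e + η ^ (n - e)) := by
  obtain ⟨m, rfl⟩ := Nat.exists_eq_add_of_le' he
  have head : ∀ a ∈ range m, η ^ (a + (a + e) % (m + e)) = η ^ e * (η ^ 2) ^ a := by
    intro a ha
    rw [Nat.mod_eq_of_lt (by simp at ha; omega), ← pow_mul, ← pow_add]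
    ring_nf
  have tail : ∀ b ∈ range e, η ^ (m + b + (m + b + e) % (m + e)) = η ^ m * (η ^ 2) ^ b := by
    intro b hb
    rw [show m + b + e = b + (m + e) by omega, Nat.add_mod_right,
      Nat.mod_eq_of_lt (by simp at hb; omega), ← pow_mul, ← pow_add]
    ring_nf
  rw [sum_range_add, sum_congr rfl head, sum_congr rfl tail, ← mul_sum, ← mul_sum, mul_add,
    mul_left_comm, mul_neg_geom_sum, mul_left_comm, mul_neg_geom_sum, Nat.add_sub_cancel]
  ring

theorem sum_sq_sub_mul_comp_perm_le {ι : Type*} [Fintype ι] (σ : Equiv.Perm ι) {η : ℝ}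
    (hη : 0 ≤ η) (w : ι → ℝ) :
    ∑ i, (w i - η * w (σ i)) ^ 2 ≤ (1 + η) ^ 2 * ∑ i, w i ^ 2 := by
  calc ∑ i, (w i - η * w (σ i)) ^ 2
      ≤ ∑ i, (1 + η) * (w i ^ 2 + η * w (σ i) ^ 2) :=
        sum_le_sum fun i _ ↦ by nlinarith [mul_nonneg hη (sq_nonneg (w i + w (σ i)))]
    _ = (1 + η) ^ 2 * ∑ i, w i ^ 2 := by
        rw [← mul_sum, sum_add_distrib, ← mul_sum, Equiv.sum_comp σ (fun i ↦ w i ^ 2)]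
        ring

theorem le_of_hasEigenvalue_toLin' {ι : Type*} [Fintype ι] [DecidableEq ι] {M : Matrix ι ι ℝ}
    {a t : ℝ} (hM : ∀ v, a * ∑ i, v i ^ 2 ≤ v ⬝ᵥ M *ᵥ v)
    (ht : Module.End.HasEigenvalue (toLin' M) t) : a ≤ t := by
  obtain ⟨v, hv⟩ := ht.exists_hasEigenvector
  have hMv : M *ᵥ v = t • v := by simpa using hv.apply_eq_smul
  have hpos : 0 < ∑ i, v i ^ 2 := by
    obtain ⟨i, hi⟩ := Function.ne_iff.1 hv.2
    exact sum_pos' (fun i _ ↦ sq_nonneg _) ⟨i, mem_univ i, sq_pos_of_ne_zero hi⟩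
  have hquad : v ⬝ᵥ M *ᵥ v = t * ∑ i, v i ^ 2 := by
    simp only [hMv, dotProduct, Pi.smul_apply, smul_eq_mul, mul_sum]
    exact sum_congr rfl fun i _ ↦ by ring
  exact le_of_mul_le_mul_right (hquad ▸ hM v) hpos

def cycleKernel (n : ℕ) (η : ℝ) : Matrix (Fin n) (Fin n) ℝ :=
  of fun i j ↦ η ^ ((i : ℤ) - j).natAbs + η ^ (n - ((i : ℤ) - j).natAbs)

def cycleJoinMatrix (n : ℕ) (η : ℝ) : Matrix (Fin n) (Fin n) ℝ :=
  cycleKernel n η - of fun _ _ ↦ η ^ n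

def powCirculant (n : ℕ) (η : ℝ) : Matrix (Fin n) (Fin n) ℝ :=
  circulant fun m ↦ η ^ (m : ℕ)

theorem cycleKernel_apply_eq_sub {n : ℕ} (η : ℝ) (i j : Fin n) :
    cycleKernel n η i j = η ^ ((i - j : Fin n) : ℕ) + η ^ (n - ((i - j : Fin n) : ℕ)) := by
  rcases le_or_gt j i with hji | hij
  · rw [Fin.coe_sub_iff_le.2 hji, cycleKernel, of_apply]
    congr 2 <;> omega
  · rw [Fin.coe_sub_iff_lt.2 hij, cycleKernel, of_apply, add_comm]
    congr 2 <;> omega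

section

variable {n : ℕ} [NeZero n]

theorem one_sub_sq_smul_transpose_mul_self_powCirculant (η : ℝ) :
    (1 - η ^ 2) • ((powCirculant n η)ᵀ * powCirculant n η) = (1 - η ^ n) • cycleKernel n η := by
  ext j k
  have reindex : ∑ i : Fin n, η ^ ((i - j : Fin n) : ℕ) * η ^ ((i - k : Fin n) : ℕ) =
      ∑ a ∈ range n, η ^ (a + (a + ((j - k : Fin n) : ℕ)) % n) := by
    rw [← Equiv.sum_comp (Equiv.addRight j), ← Fin.sum_univ_eq_sum_range
      (fun a ↦ η ^ (a + (a + ((j - k : Fin n) : ℕ)) % n))]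
    refine sum_congr rfl fun a _ ↦ ?_
    rw [Equiv.coe_addRight, add_sub_cancel_right, ← pow_add, ← Fin.val_add,
      show a + j - k = a + (j - k) by abel]
  simp only [Matrix.smul_apply, mul_apply, transpose_apply, powCirculant, circulant_apply,
    smul_eq_mul]
  rw [reindex, one_sub_sq_mul_sum_pow_add_mod η (j - k).isLt.le, cycleKernel_apply_eq_sub]

theorem powCirculant_mulVec_apply (η : ℝ) (v : Fin n → ℝ) (i : Fin n) :
    (powCirculant n η *ᵥ v) i = ∑ m ∈ range n, η ^ m * v (i - m) := by
  rw [mulVec, dotProduct, ← Equiv.sum_comp (Equiv.subLeft i),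
    ← Fin.sum_univ_eq_sum_range (fun m ↦ η ^ m * v (i - m))]
  simp [powCirculant]

theorem powCirculant_mulVec_sub_mul_apply_sub_one (η : ℝ) (v : Fin n → ℝ) (i : Fin n) :
    (powCirculant n η *ᵥ v) i - η * (powCirculant n η *ᵥ v) (i - 1) = (1 - η ^ n) * v i := by
  let f : ℕ → ℝ := fun m ↦ η ^ m * v (i - m)
  have shift : η * (powCirculant n η *ᵥ v) (i - 1) = ∑ m ∈ range n, f (m + 1) := by
    rw [powCirculant_mulVec_apply, mul_sum]
    refine sum_congr rfl fun m _ ↦ ?_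
    simp only [f, Nat.cast_succ, pow_succ', sub_add_eq_sub_sub_swap]
    ring
  rw [powCirculant_mulVec_apply, shift, ← sum_sub_distrib, sum_range_sub']
  simp [one_sub_mul]

theorem sq_one_sub_pow_mul_sum_sq_le {η : ℝ} (hη : 0 ≤ η) (v : Fin n → ℝ) :
    (1 - η ^ n) ^ 2 * ∑ i, v i ^ 2 ≤ (1 + η) ^ 2 * ∑ i, (powCirculant n η *ᵥ v) i ^ 2 := by
  simpa only [Equiv.subRight_apply, powCirculant_mulVec_sub_mul_apply_sub_one, mul_pow,
    ← mul_sum] using sum_sq_sub_mul_comp_perm_le (Equiv.subRight 1) hη (powCirculant n η *ᵥ v)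

theorem one_sub_pow_mul_dotProduct_cycleKernel_mulVec (η : ℝ) (v : Fin n → ℝ) :
    (1 - η ^ n) * (v ⬝ᵥ cycleKernel n η *ᵥ v) =
      (1 - η ^ 2) * ∑ i, (powCirculant n η *ᵥ v) i ^ 2 := by
  rw [← smul_eq_mul, ← dotProduct_smul, ← smul_mulVec,
    ← one_sub_sq_smul_transpose_mul_self_powCirculant, smul_mulVec, dotProduct_smul,
    ← mulVec_mulVec, dotProduct_mulVec, vecMul_transpose]
  simp [dotProduct, sq]

theorem mul_sum_sq_le_dotProduct_cycleKernel_mulVec {η : ℝ} (hη0 : 0 ≤ η) (hη1 : η < 1)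
    (v : Fin n → ℝ) :
    (1 - η) * (1 - η ^ n) / (1 + η) * ∑ i, v i ^ 2 ≤ v ⬝ᵥ cycleKernel n η *ᵥ v := by
  have hηn : 0 < 1 - η ^ n := sub_pos.2 (pow_lt_one₀ hη0 hη1 (NeZero.ne n))
  have key := mul_le_mul_of_nonneg_left (sq_one_sub_pow_mul_sum_sq_le hη0 v)
    (sub_nonneg.2 hη1.le)
  rw [div_mul_eq_mul_div, div_le_iff₀ (by linarith)]
  refine le_of_mul_le_mul_left ?_ hηn
  linear_combination key - (1 + η) * one_sub_pow_mul_dotProduct_cycleKernel_mulVec η v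

theorem mul_sum_sq_le_dotProduct_cycleJoinMatrix_mulVec {η : ℝ} (hη0 : 0 ≤ η) (hη1 : η < 1)
    (v : Fin n → ℝ) :
    ((1 - η) * (1 - η ^ n) / (1 + η) - n * η ^ n) * ∑ i, v i ^ 2 ≤
      v ⬝ᵥ cycleJoinMatrix n η *ᵥ v := by
  have hJ : v ⬝ᵥ (of fun _ _ ↦ η ^ n : Matrix (Fin n) (Fin n) ℝ) *ᵥ v = η ^ n * (∑ i, v i) ^ 2 := by
    simp [mulVec, dotProduct, ← mul_sum, ← sum_mul, sq]
    ring
  have hsum : (∑ i, v i) ^ 2 ≤ n * ∑ i, v i ^ 2 := by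
    simpa using sq_sum_le_card_mul_sum_sq (s := univ) (f := v)
  rw [cycleJoinMatrix, sub_mulVec, dotProduct_sub, hJ]
  nlinarith [mul_sum_sq_le_dotProduct_cycleKernel_mulVec hη0 hη1 v,
    mul_le_mul_of_nonneg_left hsum (pow_nonneg hη0 n)]

end

theorem tendsto_rpow_mul_exp_neg_mul_rpow_atTop_nhds_zero (a : ℝ) {b c : ℝ} (hb : 0 < b)
    (hc : 0 < c) : Tendsto (fun x : ℝ ↦ x ^ a * exp (-(c * x ^ b))) atTop (𝓝 0) := by
  refine ((tendsto_rpow_mul_exp_neg_mul_atTop_nhds_zero (a / b) c hc).comp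
    (tendsto_rpow_atTop hb)).congr' ?_
  filter_upwards [eventually_ge_atTop 0] with x hx
  rw [Function.comp_apply, ← rpow_mul hx, mul_div_cancel₀ a hb.ne', neg_mul]

theorem one_sub_pow_le_exp_neg_mul {ρ : ℝ} (hρ : ρ ≤ 1) (n : ℕ) :
    (1 - ρ) ^ n ≤ exp (-(ρ * n)) :=
  calc (1 - ρ) ^ n ≤ exp (-ρ) ^ n := pow_le_pow_left₀ (by linarith) (one_sub_le_exp_neg ρ) n
    _ = exp (-(ρ * n)) := by rw [← exp_nat_mul]; ring_nf

theorem eventually_succ_mul_one_sub_pow_le {δ C : ℝ} (hδ : δ < 1) (hC : 0 < C) :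
    ∀ᶠ n : ℕ in atTop, ∀ ρ : ℝ, C * (n : ℝ) ^ (-δ) ≤ ρ → ρ ≤ 1 →
      (n + 1) * (1 - ρ) ^ n ≤ ρ / 4 := by
  have small : ∀ᶠ n : ℕ in atTop, (n : ℝ) ^ (1 + δ) * exp (-(C * (n : ℝ) ^ (1 - δ))) ≤ C / 8 :=
    ((tendsto_rpow_mul_exp_neg_mul_rpow_atTop_nhds_zero (1 + δ) (sub_pos.2 hδ) hC).comp
      tendsto_natCast_atTop_atTop).eventually (eventually_le_nhds (by positivity))
  filter_upwards [small, eventually_ge_atTop 1] with n hsmall hn ρ hρC hρ1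
  have hpos : (0 : ℝ) < n := Nat.cast_pos.2 hn
  have hexp : exp (-(ρ * n)) ≤ exp (-(C * (n : ℝ) ^ (1 - δ))) := by
    refine exp_le_exp.2 (neg_le_neg ?_)
    calc C * (n : ℝ) ^ (1 - δ) = C * (n : ℝ) ^ (-δ) * n := by
          rw [mul_assoc, ← rpow_add_one hpos.ne']; ring_nf
      _ ≤ ρ * n := mul_le_mul_of_nonneg_right hρC hpos.le
  have hsplit : (n : ℝ) = (n : ℝ) ^ (-δ) * (n : ℝ) ^ (1 + δ) := by
    rw [← rpow_add hpos]; simp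
  calc (n + 1) * (1 - ρ) ^ n ≤ 2 * n * exp (-(C * (n : ℝ) ^ (1 - δ))) := by
        gcongr
        · linarith [(Nat.one_le_cast (α := ℝ)).2 hn]
        · exact (one_sub_pow_le_exp_neg_mul hρ1 n).trans hexp
    _ = 2 * (n : ℝ) ^ (-δ) * ((n : ℝ) ^ (1 + δ) * exp (-(C * (n : ℝ) ^ (1 - δ)))) := by
        linear_combination (2 * exp (-(C * (n : ℝ) ^ (1 - δ)))) * hsplit
    _ ≤ 2 * (n : ℝ) ^ (-δ) * (C / 8) := by gcongr
    _ ≤ ρ / 4 := by linarith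

/-- For every `δ ∈ (0,1)` and `C > 0` there is `N` such that for all
`n ≥ N` and `ρ ∈ (0,1]` with `ρ ≥ C·n^{−δ}`, setting `η = 1 − ρ`, every eigenvalue of
the expected join matrix of the `n`-cycle, `φ^cycle_{ij} = η^{|i−j|} + η^{n−|i−j|} − η^n`,
is strictly greater than `ρ/4`. -/
theorem min_eigenvalue_cycle_matrix
    (δ : ℝ) (hδ : δ ∈ Set.Ioo (0 : ℝ) 1) (C : ℝ) (hC : 0 < C) :
    ∃ N : ℕ, ∀ n : ℕ, N ≤ n → ∀ ρ η : ℝ, 0 < ρ → ρ ≤ 1 →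
      C * (n : ℝ) ^ (-δ) ≤ ρ → η = 1 - ρ →
      ∀ M : Matrix (Fin n) (Fin n) ℝ,
        (∀ i j, M i j =
          η ^ (((i : ℤ) - (j : ℤ)).natAbs) +
            η ^ (n - ((i : ℤ) - (j : ℤ)).natAbs) - η ^ n) →
        ∀ t : ℝ, Module.End.HasEigenvalue (Matrix.toLin' M) t → ρ / 4 < t := by
  obtain ⟨N, hN⟩ := eventually_atTop.1
    ((eventually_succ_mul_one_sub_pow_le hδ.2 hC).and (eventually_ge_atTop 1))
  refine ⟨N, fun n hn ρ η hρ0 hρ1 hρC hη M hM t ht ↦ ?_⟩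
  obtain ⟨hsmall, hn1⟩ := hN n hn
  have : NeZero n := ⟨by omega⟩
  have hMφ : M = cycleJoinMatrix n η := by
    ext i j
    rw [hM, cycleJoinMatrix, cycleKernel, Matrix.sub_apply, of_apply, of_apply]
  have hbound := le_of_hasEigenvalue_toLin'
    (hMφ ▸ mul_sum_sq_le_dotProduct_cycleJoinMatrix_mulVec (by linarith) (by linarith)) ht
  have hηn : (n + 1) * η ^ n ≤ ρ / 4 := hη ▸ hsmall ρ hρC hρ1
  have hηn1 : η ^ n < 1 := pow_lt_one₀ (by linarith) (by linarith) (NeZero.ne n)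
  calc ρ / 4 ≤ ρ * (1 - η ^ n) / 2 - n * η ^ n := by nlinarith
    _ < (1 - η) * (1 - η ^ n) / (1 + η) - n * η ^ n := by
        rw [show 1 - η = ρ by linarith]
        gcongr ?_ - _
        exact div_lt_div_of_pos_left (mul_pos hρ0 (sub_pos.2 hηn1)) (by linarith) (by linarith)
    _ ≤ t := hbound
end

section
/- For all constants C, c > 0 there exists N ∈ ℕ such that the following holds for all n ≥ N and all ε, ρ ∈ (0,1] satisfying ρ ≥ (c/C)^{2/3} · (log n)^{2/3} / (n^{1/3} ε^{4/3}). Set η = 1 − ρ and m = c · √n · (log n)² / (ε² ρ^{3/2}). If μ is a probability vector on {0,…,n−1} with ‖μ‖_∞ ≤ C·log(n)/m and total variation distance from the uniform distribution greater than ε (i.e. (1/2)·Σ_i |μ_i − 1/n| > ε), then, with z = μ − ν and ν = (1/n,…,1/n), it holds that μᵀ A(n,η) μ > νᵀ A(n,η) ν + (ρ/8)·‖z‖₂². -/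
/-!
Write `μ = ν + z` with `∑ z = 0`, so that `μᵀAμ = νᵀAν + 2 νᵀAz + zᵀAz` for the symmetric
kernel `A i j = η ^ |i - j|`.

With the geometrically weighted prefix sums `P 0 = 0`, `P (k + 1) = η P k + z k` the quadratic
form telescopes, `zᵀAz = ∑ k, (P (k + 1) ^ 2 - η ^ 2 P k ^ 2)`, and since `z k = P (k + 1) - η P k`
this gives `(1 - η) ‖z‖² ≤ (1 + η) zᵀAz`, i.e. `zᵀAz ≥ (ρ / 2) ‖z‖²`.

The `j`-th row sum of `A` is `((1 + η) - η ^ (j + 1) - η ^ (n - j)) / (1 - η)`; as `∑ z = 0` only the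
deficits `η ^ (j + 1) + η ^ (n - j)` contribute, and they sum to at most `2 / ρ`, so
`νᵀAz ≥ -2 ‖μ‖_∞ / (n ρ²)`. Finally `‖z‖₂² > 4 ε² / n` by Cauchy–Schwarz, and once
`log n ≥ 2 C / c` the choice of `m` and the lower bound on `ρ` give `8 ‖μ‖_∞ ≤ 3 ρ³ ε²`, so the
cross term costs at most `(3 ρ / 8) ‖z‖₂²`.
-/

open Finset

noncomputable def pathKernel (η : ℝ) (i j : ℕ) : ℝ := η ^ ((i : ℤ) - j).natAbs

noncomputable def pathForm (η : ℝ) (n : ℕ) (u v : ℕ → ℝ) : ℝ :=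
  ∑ i ∈ range n, ∑ j ∈ range n, u i * pathKernel η i j * v j

noncomputable def geomPrefixSum (η : ℝ) (z : ℕ → ℝ) : ℕ → ℝ
  | 0 => 0
  | k + 1 => η * geomPrefixSum η z k + z k

section PathKernel

variable {η : ℝ} {n : ℕ}

lemma pathKernel_comm (i j : ℕ) : pathKernel η i j = pathKernel η j i := by
  rw [pathKernel, pathKernel, ← Int.natAbs_neg, neg_sub]

lemma pathKernel_of_le {i j : ℕ} (h : i ≤ j) : pathKernel η i j = η ^ (j - i) := by
  rw [pathKernel]; congr 1; omega

lemma pathForm_comm (u v : ℕ → ℝ) : pathForm η n u v = pathForm η n v u := by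
  rw [pathForm, pathForm, sum_comm]
  refine sum_congr rfl fun i _ => sum_congr rfl fun j _ => ?_
  rw [pathKernel_comm]; ring

lemma pathForm_add_self (u v : ℕ → ℝ) :
    pathForm η n (u + v) (u + v) =
      pathForm η n u u + 2 * pathForm η n u v + pathForm η n v v := by
  have h := pathForm_comm (η := η) (n := n) v u
  simp only [pathForm, Pi.add_apply, add_mul, mul_add, sum_add_distrib] at h ⊢
  linarith

lemma pathForm_const_left (a : ℝ) (v : ℕ → ℝ) :
    pathForm η n (fun _ => a) v = a * pathForm η n 1 v := by
  simp only [pathForm, Pi.one_apply, mul_sum, one_mul, mul_assoc]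

lemma sum_mul_pathKernel_eq_geomPrefixSum (z : ℕ → ℝ) (n : ℕ) :
    ∑ i ∈ range n, z i * pathKernel η i n = η * geomPrefixSum η z n := by
  induction n with
  | zero => simp [geomPrefixSum]
  | succ n ih =>
    have hshift : ∀ i ∈ range n,
        z i * pathKernel η i (n + 1) = η * (z i * pathKernel η i n) := by
      intro i hi
      have hi : i < n := mem_range.1 hi
      rw [pathKernel_of_le (by omega), pathKernel_of_le hi.le, Nat.sub_add_comm hi.le, pow_succ]
      ring
    rw [sum_range_succ, sum_congr rfl hshift, ← mul_sum, ih,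
      pathKernel_of_le (Nat.le_add_right n 1), geomPrefixSum, Nat.add_sub_cancel_left, pow_one]
    ring

lemma pathForm_self_eq_sum (z : ℕ → ℝ) (n : ℕ) :
    pathForm η n z z =
      ∑ k ∈ range n, (geomPrefixSum η z (k + 1) ^ 2 - η ^ 2 * geomPrefixSum η z k ^ 2) := by
  induction n with
  | zero => simp [pathForm]
  | succ n ih =>
    have hrow : ∑ j ∈ range n, z n * pathKernel η n j * z j =
        z n * (η * geomPrefixSum η z n) := by
      rw [← sum_mul_pathKernel_eq_geomPrefixSum, mul_sum]
      exact sum_congr rfl fun j _ => by rw [pathKernel_comm]; ring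
    have hcol : ∑ i ∈ range n, z i * pathKernel η i n * z n =
        z n * (η * geomPrefixSum η z n) := by
      rw [← sum_mul_pathKernel_eq_geomPrefixSum, mul_sum]
      exact sum_congr rfl fun j _ => by ring
    rw [sum_range_succ, ← ih, pathForm, pathForm, sum_range_succ, sum_range_succ, hrow,
      sum_congr rfl fun i _ => sum_range_succ _ _, sum_add_distrib, hcol, geomPrefixSum,
      pathKernel_of_le le_rfl]
    simp only [Nat.sub_self, pow_zero]
    ring

lemma one_sub_mul_sum_sq_le_pathForm_self (hη0 : 0 ≤ η) (hη1 : η ≤ 1) (z : ℕ → ℝ) (n : ℕ) :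
    (1 - η) * ∑ i ∈ range n, z i ^ 2 ≤ (1 + η) * pathForm η n z z := by
  set P := geomPrefixSum η z
  set X := ∑ k ∈ range n, P (k + 1) ^ 2
  set X' := ∑ k ∈ range n, P k ^ 2
  have hX' : X' ≤ X := by
    have h : X' + P n ^ 2 = X + P 0 ^ 2 := by
      rw [← sum_range_succ (fun k => P k ^ 2), sum_range_succ']
    have hP0 : P 0 = 0 := rfl
    nlinarith [sq_nonneg (P n)]
  have hQ : pathForm η n z z = X - η ^ 2 * X' := by
    rw [pathForm_self_eq_sum, sum_sub_distrib, ← mul_sum]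
  have hz : ∑ i ∈ range n, z i ^ 2 ≤ (1 + η) * (X + η * X') := by
    calc ∑ i ∈ range n, z i ^ 2
        = ∑ k ∈ range n, (P (k + 1) - η * P k) ^ 2 :=
          sum_congr rfl fun k _ => by simp only [P, geomPrefixSum]; ring
      _ ≤ ∑ k ∈ range n, (1 + η) * (P (k + 1) ^ 2 + η * P k ^ 2) :=
          sum_le_sum fun k _ => by nlinarith [mul_nonneg hη0 (sq_nonneg (P (k + 1) + P k))]
      _ = (1 + η) * (X + η * X') := by rw [← mul_sum, sum_add_distrib, ← mul_sum]
  rw [hQ]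
  nlinarith [mul_le_mul_of_nonneg_left hz (sub_nonneg.2 hη1),
    mul_nonneg (add_nonneg zero_le_one hη0) (mul_nonneg hη0 (sub_nonneg.2 hX'))]

lemma one_sub_mul_sum_pathKernel {j : ℕ} (hj : j < n) :
    (1 - η) * ∑ i ∈ range n, pathKernel η i j = 1 + η - η ^ (j + 1) - η ^ (n - j) := by
  obtain ⟨t, rfl⟩ : ∃ t, n = j + 1 + t := ⟨n - (j + 1), by omega⟩
  have hleft : ∑ i ∈ range (j + 1), pathKernel η i j = ∑ i ∈ range (j + 1), η ^ i := by
    rw [← sum_range_reflect]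
    refine sum_congr rfl fun i hi => ?_
    have hi : i < j + 1 := mem_range.1 hi
    rw [pathKernel_of_le (by omega)]
    congr 1; omega
  have hright : ∑ i ∈ range t, pathKernel η (j + 1 + i) j = η * ∑ i ∈ range t, η ^ i := by
    rw [mul_sum]
    refine sum_congr rfl fun i _ => ?_
    rw [pathKernel_comm, pathKernel_of_le (by omega), ← pow_succ']
    congr 1; omega
  rw [sum_range_add, hleft, hright, show j + 1 + t - j = t + 1 by omega, mul_add,
    mul_left_comm, mul_neg_geom_sum, mul_neg_geom_sum]
  ring

lemma neg_le_pathForm_one_left (hη0 : 0 ≤ η) (hη1 : η ≤ 1) {z : ℕ → ℝ} {M : ℝ} (hM : 0 ≤ M)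
    (hz : ∑ j ∈ range n, z j = 0) (hzM : ∀ j < n, z j ≤ M) :
    -(2 * M) ≤ (1 - η) ^ 2 * pathForm η n 1 z := by
  set d : ℕ → ℝ := fun j => η ^ (j + 1) + η ^ (n - j)
  have hrow : (1 - η) * pathForm η n 1 z = -∑ j ∈ range n, d j * z j := by
    have : (1 - η) * pathForm η n 1 z = ∑ j ∈ range n, (1 + η - d j) * z j := by
      rw [pathForm, sum_comm, mul_sum]
      refine sum_congr rfl fun j hj => ?_
      rw [← sub_sub, ← one_sub_mul_sum_pathKernel (mem_range.1 hj), mul_sum, mul_sum, sum_mul]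
      exact sum_congr rfl fun i _ => by simp only [Pi.one_apply]; ring
    simp only [this, sub_mul, sum_sub_distrib, ← mul_sum, hz, mul_zero, zero_sub]
  have hd : (1 - η) * ∑ j ∈ range n, d j ≤ 2 := by
    have hreflect : ∑ j ∈ range n, η ^ (n - j) = η * ∑ j ∈ range n, η ^ j := by
      rw [mul_sum, ← sum_range_reflect]
      refine sum_congr rfl fun j hj => ?_
      have hj : j < n := mem_range.1 hj
      rw [← pow_succ']
      congr 1; omega
    have hgeom := mul_neg_geom_sum η n
    simp only [d, sum_add_distrib, pow_succ', ← mul_sum] at hreflect ⊢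
    rw [hreflect]
    nlinarith [pow_nonneg hη0 n]
  have hdz : ∑ j ∈ range n, d j * z j ≤ M * ∑ j ∈ range n, d j := by
    rw [mul_sum]
    refine sum_le_sum fun j hj => ?_
    rw [mul_comm M]
    exact mul_le_mul_of_nonneg_left (hzM j (mem_range.1 hj)) (by positivity)
  nlinarith [mul_le_mul_of_nonneg_left hdz (sub_nonneg.2 hη1)]

end PathKernel

theorem pathForm_separation {n : ℕ} {ρ ε M : ℝ} (hn : 0 < n) (hρ0 : 0 < ρ) (hρ1 : ρ ≤ 1)
    (hε : 0 ≤ ε) (hM0 : 0 ≤ M) (hM : 8 * M ≤ 3 * ρ ^ 3 * ε ^ 2) {w : ℕ → ℝ}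
    (hw : ∑ i ∈ range n, w i = 1) (hwM : ∀ i < n, w i ≤ M)
    (hTV : 2 * ε < ∑ i ∈ range n, |w i - 1 / n|) :
    pathForm (1 - ρ) n (fun _ => 1 / n) (fun _ => 1 / n) +
        ρ / 8 * ∑ i ∈ range n, (w i - 1 / n) ^ 2 < pathForm (1 - ρ) n w w := by
  set z : ℕ → ℝ := fun i => w i - 1 / n
  have hn' : (0 : ℝ) < n := Nat.cast_pos.2 hn
  have hz : ∑ i ∈ range n, z i = 0 := by
    simp only [z, sum_sub_distrib, hw, sum_const, card_range, nsmul_eq_mul]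
    field_simp; ring
  have hzM : ∀ i < n, z i ≤ M := fun i hi => by
    have := hwM i hi; simp only [z]; linarith [one_div_pos.2 hn']
  have hcross : -(2 * M) ≤ ρ ^ 2 * pathForm (1 - ρ) n 1 z := by
    have h := neg_le_pathForm_one_left (η := 1 - ρ) (by linarith) (by linarith) hM0 hz hzM
    rwa [sub_sub_cancel] at h
  have hquad : ρ * ∑ i ∈ range n, z i ^ 2 ≤ (2 - ρ) * pathForm (1 - ρ) n z z := by
    convert one_sub_mul_sum_sq_le_pathForm_self (η := 1 - ρ) (by linarith) (by linarith) z n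
      using 2 <;> ring
  have hQ : ρ / 2 * ∑ i ∈ range n, z i ^ 2 ≤ pathForm (1 - ρ) n z z := by
    nlinarith [mul_nonneg hρ0.le (sum_nonneg fun i (_ : i ∈ range n) => sq_nonneg (z i))]
  have hCS : (∑ i ∈ range n, |z i|) ^ 2 ≤ n * ∑ i ∈ range n, z i ^ 2 := by
    simpa [sq_abs] using sq_sum_le_card_mul_sum_sq (s := range n) (f := fun i => |z i|)
  have hD : 4 * ε ^ 2 < n * ∑ i ∈ range n, z i ^ 2 := by
    nlinarith [sum_nonneg fun i (_ : i ∈ range n) => abs_nonneg (z i)]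
  have hexpand : pathForm (1 - ρ) n w w =
      pathForm (1 - ρ) n (fun _ => 1 / n) (fun _ => 1 / n) +
        2 * (1 / n) * pathForm (1 - ρ) n 1 z + pathForm (1 - ρ) n z z := by
    rw [show w = (fun _ => 1 / (n : ℝ)) + z by ext i; simp [z], pathForm_add_self,
      pathForm_const_left (1 / n) z]
    ring
  have hscaled : n * ρ ^ 2 * (ρ / 8 * ∑ i ∈ range n, z i ^ 2) <
      n * ρ ^ 2 * (2 * (1 / n) * pathForm (1 - ρ) n 1 z + pathForm (1 - ρ) n z z) := by
    have hexp : n * ρ ^ 2 * (2 * (1 / n) * pathForm (1 - ρ) n 1 z + pathForm (1 - ρ) n z z) =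
        2 * (ρ ^ 2 * pathForm (1 - ρ) n 1 z) + ρ ^ 2 * (n * pathForm (1 - ρ) n z z) := by
      field_simp
    rw [hexp]
    nlinarith [mul_le_mul_of_nonneg_left hQ (by positivity : (0 : ℝ) ≤ ρ ^ 2 * n),
      mul_lt_mul_of_pos_left hD (by positivity : (0 : ℝ) < ρ ^ 3)]
  rw [hexpand]
  linarith [lt_of_mul_lt_mul_left hscaled (by positivity)]

lemma le_mul_rpow_of_rpow_div_le {b x e ρ : ℝ} (hb : 0 ≤ b) (hx : 0 < x) (he : 0 < e)
    (hρ : b ^ ((2 : ℝ) / 3) / (x ^ ((1 : ℝ) / 3) * e ^ ((4 : ℝ) / 3)) ≤ ρ) :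
    b ≤ √x * e ^ 2 * ρ ^ ((3 : ℝ) / 2) := by
  have h := Real.rpow_le_rpow (by positivity) hρ (by norm_num : (0 : ℝ) ≤ 3 / 2)
  rw [Real.div_rpow (by positivity) (by positivity), Real.mul_rpow (by positivity) (by positivity),
    ← Real.rpow_mul hb, ← Real.rpow_mul hx.le, ← Real.rpow_mul he.le] at h
  norm_num at h
  rw [div_le_iff₀ (by positivity), ← Real.sqrt_eq_rpow] at h
  linarith

lemma eight_mul_le_of_le_mul_rpow {C c L s ε ρ m : ℝ} (hC : 0 < C) (hc : 0 < c) (hs : 0 < s)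
    (hL : 2 * C / c ≤ L) (hε0 : 0 < ε) (hε1 : ε ≤ 1) (hρ0 : 0 < ρ)
    (hb : c / C * L ≤ s * ε ^ 2 * ρ ^ ((3 : ℝ) / 2))
    (hm : m = c * s * L ^ 2 / (ε ^ 2 * ρ ^ ((3 : ℝ) / 2))) :
    8 * (C * L / m) ≤ 3 * ρ ^ 3 * ε ^ 2 := by
  set t := ρ ^ ((3 : ℝ) / 2)
  have ht0 : 0 < t := by positivity
  have ht : ρ ^ 3 = t ^ 2 := by
    rw [← Real.rpow_natCast, ← Real.rpow_natCast, ← Real.rpow_mul hρ0.le]; norm_num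
  have hL0 : 0 < L := lt_of_lt_of_le (by positivity) hL
  have hcL : 2 * C ≤ c * L := by rwa [div_le_iff₀' hc] at hL
  have hCst : c * L ≤ C * (s * t) := by
    rw [div_mul_eq_mul_div, div_le_iff₀' hC] at hb
    nlinarith [mul_le_mul_of_nonneg_left (pow_le_one₀ hε0.le hε1 : ε ^ 2 ≤ 1)
      (by positivity : (0 : ℝ) ≤ C * s * t)]
  have hkey : 4 * C ≤ c * L * (s * t) := by
    have : C * (4 * C) ≤ C * (c * L * (s * t)) := by
      nlinarith [mul_le_mul_of_nonneg_left hCst (by positivity : (0 : ℝ) ≤ c * L)]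
    exact le_of_mul_le_mul_left this hC
  rw [hm, ht, div_div_eq_mul_div, mul_div_assoc', div_le_iff₀ (by positivity)]
  nlinarith [mul_le_mul_of_nonneg_left hkey (by positivity : (0 : ℝ) ≤ 2 * L * ε ^ 2 * t),
    (by positivity : (0 : ℝ) ≤ c * s * L ^ 2 * ε ^ 2 * t ^ 2)]


/-- separation in the expected test statistic, path case.
For all constants `C, c > 0` there is `N` such that for all `n ≥ N` and
`ε, ρ ∈ (0,1]` with `ρ ≥ (c/C)^{2/3}·(log n)^{2/3}/(n^{1/3} ε^{4/3})`, setting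
`η = 1 − ρ` and `m = c·√n·(log n)²/(ε² ρ^{3/2})`: if `μ` is a probability vector
with `‖μ‖_∞ ≤ C log n/m` whose TV distance from uniform exceeds `ε`, then with
`z = μ − ν` (`ν` uniform) and `A_{ij} = η^{|i−j|}`,
`μᵀ A μ > νᵀ A ν + (ρ/8)·‖z‖₂²`. -/
theorem separation_expected_value_path
    (C c : ℝ) (hC : 0 < C) (hc : 0 < c) :
    ∃ N : ℕ, ∀ n : ℕ, N ≤ n → ∀ ε ρ : ℝ,
      0 < ε → ε ≤ 1 → 0 < ρ → ρ ≤ 1 →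
      (c / C) ^ ((2 : ℝ) / 3) * (Real.log n) ^ ((2 : ℝ) / 3) /
          ((n : ℝ) ^ ((1 : ℝ) / 3) * ε ^ ((4 : ℝ) / 3)) ≤ ρ →
      ∀ η m : ℝ, η = 1 - ρ →
        m = c * Real.sqrt n * (Real.log n) ^ 2 / (ε ^ 2 * ρ ^ ((3 : ℝ) / 2)) →
      ∀ μ : Fin n → ℝ, (∀ i, 0 ≤ μ i) → (∑ i, μ i = 1) →
        (∀ i, μ i ≤ C * Real.log n / m) →
        ε < (1 / 2) * ∑ i, |μ i - 1 / n| →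
        (∑ i : Fin n, ∑ j : Fin n,
            (1 / n : ℝ) * η ^ (((i : ℤ) - (j : ℤ)).natAbs) * (1 / n))
            + (ρ / 8) * ∑ i, (μ i - 1 / n) ^ 2
          < ∑ i : Fin n, ∑ j : Fin n,
              μ i * η ^ (((i : ℤ) - (j : ℤ)).natAbs) * μ j := by
  refine ⟨⌈Real.exp (2 * C / c)⌉₊, fun n hN ε ρ hε0 hε1 hρ0 hρ1 hρ η m hη hm μ _ hμ1 hμM hTV => ?_⟩
  have hexp : Real.exp (2 * C / c) ≤ n := Nat.ceil_le.1 hN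
  have hn : (0 : ℝ) < n := (Real.exp_pos _).trans_le hexp
  have hlog : 2 * C / c ≤ Real.log n := (Real.le_log_iff_exp_le hn).2 hexp
  have hlog0 : 0 < Real.log n := (by positivity : (0 : ℝ) < 2 * C / c).trans_le hlog
  have hM0 : 0 ≤ C * Real.log n / m := by rw [hm]; positivity
  have hM := eight_mul_le_of_le_mul_rpow hC hc (Real.sqrt_pos.2 hn) hlog hε0 hε1 hρ0
    (le_mul_rpow_of_rpow_div_le (by positivity) hn hε0
      (by rwa [← Real.mul_rpow (by positivity) hlog0.le] at hρ)) hm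
  set w : ℕ → ℝ := fun k => if h : k < n then μ ⟨k, h⟩ else 0
  have hwμ : ∀ i : Fin n, w i = μ i := fun i => dif_pos i.isLt
  have hw1 : ∑ i ∈ range n, w i = 1 := by simpa only [Finset.sum_range, hwμ] using hμ1
  have hwM : ∀ i < n, w i ≤ C * Real.log n / m := fun i hi => by
    simpa only [w, dif_pos hi] using hμM ⟨i, hi⟩
  have hwTV : 2 * ε < ∑ i ∈ range n, |w i - 1 / n| := by
    simp only [Finset.sum_range, hwμ]; linarith
  subst hη
  simpa only [pathForm, pathKernel, Finset.sum_range, hwμ] using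
    pathForm_separation (Nat.cast_pos.1 hn) hρ0 hρ1 hε0.le hM0 hM hw1 hwM hwTV
end

section
/- Let n ∈ ℕ, let m > 0 be a real number, let μ be a probability vector on {0,…,n−1}, and let Γ = (Γ_1, …, Γ_b) be a partition of {0,…,n−1}. Let T_0, …, T_{n−1} be mutually independent random variables with T_i ∼ Poisson(m·μ_i), and for each j ∈ {1,…,b} set X_j = Σ_{i ∈ Γ_j} T_i. Define Y = (1/m²)·Σ_{j=1}^b X_j·(X_j − 1). Then Var(Y) = (2/m²)·Σ_{j=1}^b μ[Γ_j]² + (4/m)·Σ_{j=1}^b μ[Γ_j]³, where μ[Γ_j] = Σ_{i ∈ Γ_j} μ_i. -/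
/-!
The block sums `X_j` are independent (disjoint blocks of an independent family) and Poisson with
rates `m μ[Γ_j]`, so `Var(Y) = m⁻⁴ ∑_j Var(X_j (X_j - 1))`. For `X ∼ Poisson(λ)` the factorial
moments are `E[X(X-1)⋯(X-k+1)] = λ^k`, and `(X(X-1))² = X⁽⁴⁾ + 4X⁽³⁾ + 2X⁽²⁾` in falling
factorials, whence `Var(X(X-1)) = λ⁴ + 4λ³ + 2λ² - (λ²)² = 4λ³ + 2λ²`.
-/

open MeasureTheory ProbabilityTheory Real
open scoped NNReal Nat

namespace ProbabilityTheory

lemma poissonMeasure_zero : Po(0) = Measure.dirac 0 := by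
  refine Measure.ext_of_singleton fun n ↦ ?_
  rw [poissonMeasure_singleton]
  cases n <;> simp

lemma hasSum_descFactorial_poissonMeasure (r : ℝ≥0) (k : ℕ) :
    HasSum (fun n ↦ exp (-r) * r ^ n / n ! * (n.descFactorial k : ℝ)) ((r : ℝ) ^ k) := by
  have shifted : ∀ n : ℕ, exp (-r) * r ^ (n + k) / (n + k)! * ((n + k).descFactorial k : ℝ)
      = r ^ k * (exp (-r) * r ^ n / n !) := fun n ↦ by
    have hfac := Nat.factorial_mul_descFactorial (Nat.le_add_left k n)
    rw [Nat.add_sub_cancel] at hfac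
    rw [← hfac, pow_add]
    push_cast
    field_simp
  have h := (hasSum_one_poissonMeasure r).mul_left ((r : ℝ) ^ k)
  rw [mul_one, ← funext shifted,
    hasSum_nat_add_iff (f := fun n ↦ exp (-r) * r ^ n / n ! * (n.descFactorial k : ℝ))] at h
  rwa [Finset.sum_eq_zero fun i hi ↦ by simp [Nat.descFactorial_of_lt (Finset.mem_range.1 hi)],
    add_zero] at h

lemma integrable_descFactorial_poissonMeasure (r : ℝ≥0) (k : ℕ) :
    Integrable (fun n : ℕ ↦ (n.descFactorial k : ℝ)) Po(r) := by
  rw [integrable_poissonMeasure_iff]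
  simpa using (hasSum_descFactorial_poissonMeasure r k).summable

lemma integral_descFactorial_poissonMeasure (r : ℝ≥0) (k : ℕ) :
    ∫ n, (n.descFactorial k : ℝ) ∂Po(r) = r ^ k := by
  simpa [integral_poissonMeasure] using (hasSum_descFactorial_poissonMeasure r k).tsum_eq

lemma cast_descFactorial_eq_prod_range {R : Type*} [CommRing R] (x k : ℕ) :
    (x.descFactorial k : R) = ∏ j ∈ Finset.range k, ((x : R) - j) := by
  rw [← descPochhammer_eval_eq_descFactorial, descPochhammer_eval_eq_prod_range]

lemma sq_mul_sub_one_eq_descFactorial (x : ℕ) :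
    ((x : ℝ) * (x - 1)) ^ 2
      = x.descFactorial 4 + 4 * x.descFactorial 3 + 2 * x.descFactorial 2 := by
  simp only [cast_descFactorial_eq_prod_range, Finset.prod_range_succ, Finset.prod_range_zero]
  push_cast
  ring

lemma memLp_two_mul_sub_one_poissonMeasure (r : ℝ≥0) :
    MemLp (fun n : ℕ ↦ (n : ℝ) * (n - 1)) 2 Po(r) := by
  refine (memLp_two_iff_integrable_sq .of_discrete).2 ?_
  simp_rw [sq_mul_sub_one_eq_descFactorial]
  exact ((integrable_descFactorial_poissonMeasure r 4).add
    ((integrable_descFactorial_poissonMeasure r 3).const_mul 4)).add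
    ((integrable_descFactorial_poissonMeasure r 2).const_mul 2)

lemma variance_mul_sub_one_poissonMeasure (r : ℝ≥0) :
    Var[fun n : ℕ ↦ (n : ℝ) * (n - 1); Po(r)] = 4 * (r : ℝ) ^ 3 + 2 * r ^ 2 := by
  have hint := integrable_descFactorial_poissonMeasure r
  have hmean : ∫ n, (n : ℝ) * (n - 1) ∂Po(r) = r ^ 2 := by
    simp_rw [← Nat.cast_descFactorial_two]
    exact integral_descFactorial_poissonMeasure r 2
  have hsq : ∫ n, ((n : ℝ) * (n - 1)) ^ 2 ∂Po(r) = (r : ℝ) ^ 4 + 4 * r ^ 3 + 2 * r ^ 2 := by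
    simp_rw [sq_mul_sub_one_eq_descFactorial]
    rw [integral_add ((hint 4).fun_add ((hint 3).const_mul 4)) ((hint 2).const_mul 2),
      integral_add (hint 4) ((hint 3).const_mul 4), integral_const_mul, integral_const_mul]
    simp only [integral_descFactorial_poissonMeasure]
  rw [variance_eq_sub (memLp_two_mul_sub_one_poissonMeasure r)]
  simp only [Pi.pow_apply, hsq, hmean]
  ring

section HasLaw

variable {Ω : Type*} [MeasurableSpace Ω] {P : Measure Ω}

lemma hasLaw_poissonMeasure_of_measure_eq {X : Ω → ℕ} (hX : Measurable X) {r : ℝ≥0}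
    (h : ∀ k, P {ω | X ω = k} = ENNReal.ofReal (exp (-r) * r ^ k / k !)) :
    HasLaw X Po(r) P where
  aemeasurable := hX.aemeasurable
  map_eq := Measure.ext_of_singleton fun k ↦ by
    rw [Measure.map_apply hX (measurableSet_singleton k), poissonMeasure_singleton, ← h k]
    rfl

lemma HasLaw.memLp_two_mul_sub_one_of_poissonMeasure {X : Ω → ℕ} {r : ℝ≥0}
    (hX : HasLaw X Po(r) P) : MemLp (fun ω ↦ (X ω : ℝ) * (X ω - 1)) 2 P := by
  have h := memLp_two_mul_sub_one_poissonMeasure r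
  rw [← hX.map_eq] at h
  exact (memLp_map_measure_iff .of_discrete hX.aemeasurable).1 h

lemma HasLaw.variance_mul_sub_one_of_poissonMeasure {X : Ω → ℕ} {r : ℝ≥0}
    (hX : HasLaw X Po(r) P) :
    Var[fun ω ↦ (X ω : ℝ) * (X ω - 1); P] = 4 * (r : ℝ) ^ 3 + 2 * r ^ 2 := by
  rw [← variance_mul_sub_one_poissonMeasure r, ← hX.map_eq,
    variance_map .of_discrete hX.aemeasurable]
  rfl

lemma iIndepFun.hasLaw_sum_poissonMeasure {ι : Type*} {X : ι → Ω → ℕ} (hX : iIndepFun X P)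
    {r : ι → ℝ≥0} (hlaw : ∀ i, HasLaw (X i) Po(r i) P) (s : Finset ι) :
    HasLaw (∑ i ∈ s, X i) Po(∑ i ∈ s, r i) P := by
  classical
  have := hX.isProbabilityMeasure
  induction s using Finset.induction_on with
  | empty => simpa [poissonMeasure_zero] using hasLaw_dirac_of_ae_eq (x := 0) (X := 0) .rfl
  | insert i s hi ih =>
    rw [Finset.sum_insert hi, Finset.sum_insert hi, add_comm, add_comm (r i)]
    exact (hX.indepFun_finsetSum_of_notMem₀ (fun j ↦ (hlaw j).aemeasurable) hi
      ).hasLaw_add_poissonMeasure ih (hlaw i)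

lemma iIndepFun.indepFun_finsetSum_of_disjoint {ι β : Type*} [AddCommMonoid β]
    [MeasurableSpace β] [MeasurableAdd₂ β] {X : ι → Ω → β} (hX : iIndepFun X P)
    (hmeas : ∀ i, Measurable (X i)) {s t : Finset ι} (hst : Disjoint s t) :
    IndepFun (∑ i ∈ s, X i) (∑ i ∈ t, X i) P := by
  have hsum : ∀ u : Finset ι, Measurable fun v : u → β ↦ ∑ i, v i :=
    fun u ↦ Finset.measurable_sum _ fun i _ ↦ measurable_pi_apply i
  convert (hX.indepFun_finset s t hst hmeas).comp (hsum s) (hsum t) using 1 <;>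
  · ext ω
    rw [Finset.sum_apply]
    exact (Finset.sum_coe_sort _ fun i ↦ X i ω).symm

end HasLaw

end ProbabilityTheory

theorem variance_second_component_fixed_clustering_general
    {Ω : Type*} [MeasurableSpace Ω] (P : Measure Ω) [IsProbabilityMeasure P]
    (n b : ℕ) (m : ℝ) (hm : 0 < m)
    (μ : Fin n → ℝ) (hμ0 : ∀ i, 0 ≤ μ i)
    (Γ : Fin b → Finset (Fin n))
    (hdisj : ∀ j₁ j₂, j₁ ≠ j₂ → Disjoint (Γ j₁) (Γ j₂))
    (T : Fin n → Ω → ℕ) (hmeas : ∀ i, Measurable (T i))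
    (hindep : iIndepFun T P)
    (hpois : ∀ i k, P {ω | T i ω = k} =
      ENNReal.ofReal (Real.exp (-(m * μ i)) * (m * μ i) ^ k / (Nat.factorial k))) :
    variance
        (fun ω => (1 / m ^ 2) * ∑ j : Fin b,
          (∑ i ∈ Γ j, (T i ω : ℝ)) * ((∑ i ∈ Γ j, (T i ω : ℝ)) - 1)) P
      = (2 / m ^ 2) * (∑ j : Fin b, (∑ i ∈ Γ j, μ i) ^ 2)
          + (4 / m) * ∑ j : Fin b, (∑ i ∈ Γ j, μ i) ^ 3 := by
  let r : Fin n → ℝ≥0 := fun i ↦ ⟨m * μ i, mul_nonneg hm.le (hμ0 i)⟩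
  let N : Fin b → Ω → ℕ := fun j ↦ ∑ i ∈ Γ j, T i
  let f : ℕ → ℝ := fun x ↦ x * (x - 1)
  let Z : Fin b → Ω → ℝ := fun j ↦ f ∘ N j
  have hN : ∀ j, HasLaw (N j) Po(∑ i ∈ Γ j, r i) P := fun j ↦ hindep.hasLaw_sum_poissonMeasure
    (fun i ↦ hasLaw_poissonMeasure_of_measure_eq (hmeas i) (r := r i) (hpois i)) (Γ j)
  have hrate : ∀ j, ((∑ i ∈ Γ j, r i : ℝ≥0) : ℝ) = m * ∑ i ∈ Γ j, μ i := fun j ↦ by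
    rw [NNReal.coe_sum, Finset.mul_sum]
    rfl
  have hZind : Set.Pairwise ↑(Finset.univ : Finset (Fin b)) fun j₁ j₂ ↦ Z j₁ ⟂ᵢ[P] Z j₂ :=
    fun j₁ _ j₂ _ hne ↦ (hindep.indepFun_finsetSum_of_disjoint hmeas (hdisj j₁ j₂ hne)).comp
      (.of_discrete (f := f)) (.of_discrete (f := f))
  have hY : (fun ω ↦ (1 / m ^ 2) * ∑ j, (∑ i ∈ Γ j, (T i ω : ℝ)) * ((∑ i ∈ Γ j, (T i ω : ℝ)) - 1))
      = fun ω ↦ 1 / m ^ 2 * (∑ j, Z j) ω := by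
    ext ω
    simp [Z, N, f, Finset.sum_apply]
  rw [hY, variance_const_mul,
    IndepFun.variance_sum (X := Z) (fun j _ ↦ (hN j).memLp_two_mul_sub_one_of_poissonMeasure)
      hZind,
    Finset.mul_sum, Finset.mul_sum, Finset.mul_sum, ← Finset.sum_add_distrib]
  refine Finset.sum_congr rfl fun j _ ↦ ?_
  rw [show Var[Z j; P] = _ from (hN j).variance_mul_sub_one_of_poissonMeasure, hrate]
  field_simp
  ring

/-- Let `μ` be a probability vector on `{0,…,n−1}`, let
`Γ = (Γ_1,…,Γ_b)` be a partition of `{0,…,n−1}`, let `T_0,…,T_{n−1}` be mutually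
independent with `T_i ∼ Poisson(m·μ_i)`, set `X_j = Σ_{i∈Γ_j} T_i` and
`Y = (1/m²)·Σ_j X_j(X_j−1)`.  Then
`Var(Y) = (2/m²)·Σ_j μ[Γ_j]² + (4/m)·Σ_j μ[Γ_j]³`. -/
theorem variance_second_component_fixed_clustering
    {Ω : Type*} [MeasurableSpace Ω] (P : Measure Ω) [IsProbabilityMeasure P]
    (n b : ℕ) (m : ℝ) (hm : 0 < m)
    (μ : Fin n → ℝ) (hμ0 : ∀ i, 0 ≤ μ i) (hμ1 : ∑ i, μ i = 1)
    (Γ : Fin b → Finset (Fin n))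
    (hdisj : ∀ j₁ j₂, j₁ ≠ j₂ → Disjoint (Γ j₁) (Γ j₂))
    (hcover : ∀ i : Fin n, ∃ j, i ∈ Γ j)
    (T : Fin n → Ω → ℕ) (hmeas : ∀ i, Measurable (T i))
    (hindep : iIndepFun T P)
    (hpois : ∀ i k, P {ω | T i ω = k} =
      ENNReal.ofReal (Real.exp (-(m * μ i)) * (m * μ i) ^ k / (Nat.factorial k))) :
    variance
        (fun ω => (1 / m ^ 2) * ∑ j : Fin b,
          (∑ i ∈ Γ j, (T i ω : ℝ)) * ((∑ i ∈ Γ j, (T i ω : ℝ)) - 1)) P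
      = (2 / m ^ 2) * (∑ j : Fin b, (∑ i ∈ Γ j, μ i) ^ 2)
          + (4 / m) * ∑ j : Fin b, (∑ i ∈ Γ j, μ i) ^ 3 :=
  variance_second_component_fixed_clustering_general P n b m hm μ hμ0 Γ hdisj T hmeas hindep hpois
end
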